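/- arXiv:2403.12204 — 3 statements merged into one kernel-verified Lean document; each statement's English description precedes it below -/
import Mathlib

section
/- Let f_1, …, f_k and ρ_1, …, ρ_k be continuous piecewise linear functions on a polytope Ω, and define Υ(ω) = argmax_{j ∈ {1,…,k}} f_j(ω) and Ψ(ω) = max_{j ∈ Υ(ω)} ρ_j(ω). Then there exists a finite set P ⊆ Ω such that, for every ω ∈ Ω, the set {y ∈ ℝ : (ω, y) ∈ conv({(p, Ψ(p)) : p ∈ P})} is nonempty and its maximum equals cav(Ψ)(ω), the concave closure of Ψ evaluated at ω. -/
/-!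
Refine the pieces of all the `f j` and `ρ j` to a common polytopal cover of `Ω`, and split each
piece further according to which `f j` is maximal. This covers `Ω` by finitely many polytopes,
each carrying an affine function `a ≤ Ψ` that equals `Ψ` at every point where `Ψ` is realized by
that piece; let `P` be the union of their vertex sets. Writing `x ∈ Ω` as a convex combination of
the vertices of such a piece shows that `(x, Ψ x)` lies below a point of `conv (graph Ψ|P)`.
Hence the whole convex hull of the graph of `Ψ` lies below this compact convex set, whose highest
point over `ω` is therefore `cav Ψ ω`.

The pieces are polytopes because cutting `conv V` by a halfspace `g ≤ 0` gives the convex hull of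
the vertices with `g ≤ 0` and of the points where the edges `[u, v]` cross `g = 0`.
-/

open Finset

/-- A polytope is the convex hull of a finite set of points. -/
def IsPolytope {E : Type*} [AddCommGroup E] [Module ℝ E] (S : Set E) : Prop :=
  ∃ F : Finset E, S = convexHull ℝ (F : Set E)

/-- `f` is (continuous) piecewise linear on `Ω`: finitely many polytopes cover `Ω`
and `f` agrees with an affine function on each of them. -/
def IsPWLOn {E : Type*} [AddCommGroup E] [Module ℝ E] (Ω : Set E) (f : E → ℝ) : Prop :=
  ∃ (k : ℕ) (C : Fin k → Set E), (∀ i, IsPolytope (C i)) ∧ (⋃ i, C i) = Ω ∧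
    ∀ i, ∃ g : E →ᵃ[ℝ] ℝ, ∀ x ∈ C i, f x = g x

/-- A triangulation of `Ω`, encoded by the vertex sets of its simplices. -/
structure Triangulation (E : Type*) [AddCommGroup E] [Module ℝ E] (Ω : Set E) where
  simplices : Finset (Finset E)
  indep : ∀ V ∈ simplices, AffineIndependent ℝ (fun v : (V : Set E) => (v : E))
  faces : ∀ V ∈ simplices, ∀ W ⊆ V, W ∈ simplices
  inter : ∀ V ∈ simplices, ∀ W ∈ simplices, ∃ Z ∈ simplices, Z ⊆ V ∧ Z ⊆ W ∧
    convexHull ℝ (V : Set E) ∩ convexHull ℝ (W : Set E) = convexHull ℝ (Z : Set E)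
  covers : (⋃ V ∈ simplices, convexHull ℝ (V : Set E)) = Ω

/-- `α` is the system of weights of a convex-combination representation of `ω`
with vertex set contained in `V` (weight zero outside `V`). -/
def IsConvexWeight {E : Type*} [AddCommGroup E] [Module ℝ E]
    (V : Finset E) (α : E → ℝ) (ω : E) : Prop :=
  (∀ v, 0 ≤ α v) ∧ (∀ v ∉ V, α v = 0) ∧ (∑ v ∈ V, α v) = 1 ∧ (∑ v ∈ V, α v • v) = ω

/-- `F` is the triangulation-based interpolation `I(f, γ)` (on `Ω`). -/
def IsInterpolation {E : Type*} [AddCommGroup E] [Module ℝ E] {Ω : Set E}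
    (γ : Triangulation E Ω) (f F : E → ℝ) : Prop :=
  ∀ V ∈ γ.simplices, ∀ α : E → ℝ, (∀ v ∈ V, 0 ≤ α v) → (∑ v ∈ V, α v) = 1 →
    F (∑ v ∈ V, α v • v) = ∑ v ∈ V, α v * f v

/-- The concave closure of `f` on `Ω`. -/
noncomputable def cav {E : Type*} [AddCommGroup E] [Module ℝ E]
    (Ω : Set E) (f : E → ℝ) (ω : E) : ℝ :=
  sSup {z : ℝ | (ω, z) ∈ convexHull ℝ {p : E × ℝ | p.1 ∈ Ω ∧ p.2 = f p.1}}


namespace AffineMap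

variable {E F : Type*} [AddCommGroup E] [Module ℝ E]

theorem map_sum_smul [AddCommGroup F] [Module ℝ F] {ι : Type*} (f : E →ᵃ[ℝ] F)
    {s : Finset ι} {w : ι → ℝ} (hw : ∑ i ∈ s, w i = 1) (p : ι → E) :
    f (∑ i ∈ s, w i • p i) = ∑ i ∈ s, w i • f (p i) := by
  rw [← s.affineCombination_eq_linear_combination p w hw, s.map_affineCombination p w hw,
    s.affineCombination_eq_linear_combination _ w hw]
  rfl

noncomputable def zeroCrossing (g : E →ᵃ[ℝ] ℝ) (u v : E) : E :=
  lineMap u v (g u / (g u - g v))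

variable {g : E →ᵃ[ℝ] ℝ} {u v : E}

theorem apply_zeroCrossing (h : g u ≠ g v) : g (g.zeroCrossing u v) = 0 := by
  rw [zeroCrossing, apply_lineMap, lineMap_apply_ring']
  field_simp [sub_ne_zero.2 h]
  ring

theorem sub_smul_zeroCrossing (h : g u ≠ g v) :
    (g v - g u) • g.zeroCrossing u v = g v • u - g u • v := by
  have h' : g u - g v ≠ 0 := sub_ne_zero.2 h
  rw [zeroCrossing, lineMap_apply_module, smul_add, smul_smul, smul_smul]
  rw [show (g v - g u) * (1 - g u / (g u - g v)) = g v by field_simp; ring,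
    show (g v - g u) * (g u / (g u - g v)) = -g u by field_simp; ring]
  module

theorem zeroCrossing_mem_segment (hu : g u ≤ 0) (hv : 0 < g v) :
    g.zeroCrossing u v ∈ segment ℝ u v := by
  refine _root_.lineMap_mem_segment (𝕜 := ℝ) u v ⟨div_nonneg_of_nonpos hu (by linarith), ?_⟩
  rw [div_le_one_of_neg (by linarith)]
  linarith

end AffineMap

section Halfspace

variable {E : Type*} [AddCommGroup E] [Module ℝ E]

theorem sum_product_mul_mul_sub {α : Type*} (A B : Finset α) (w g : α → ℝ) :
    ∑ q ∈ A ×ˢ B, w q.1 * w q.2 * (g q.2 - g q.1) =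
      (∑ u ∈ A, w u) * ∑ v ∈ B, w v * g v - (∑ v ∈ B, w v) * ∑ u ∈ A, w u * g u := by
  calc _ = ∑ u ∈ A, ∑ v ∈ B, (w u * (w v * g v) - (w u * g u) * w v) := by
        rw [Finset.sum_product]
        exact Finset.sum_congr rfl fun u _ => Finset.sum_congr rfl fun v _ => by ring
    _ = _ := by
        simp only [Finset.sum_sub_distrib, ← Finset.mul_sum, ← Finset.sum_mul]
        ring

theorem AffineMap.sum_product_smul_zeroCrossing {A B : Finset E} {g : E →ᵃ[ℝ] ℝ}
    (hAB : ∀ u ∈ A, ∀ v ∈ B, g u ≠ g v) (w : E → ℝ) :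
    ∑ q ∈ A ×ˢ B, (w q.1 * w q.2 * (g q.2 - g q.1)) • g.zeroCrossing q.1 q.2 =
      (∑ v ∈ B, w v * g v) • ∑ u ∈ A, w u • u - (∑ u ∈ A, w u * g u) • ∑ v ∈ B, w v • v := by
  calc _ = ∑ u ∈ A, ∑ v ∈ B, ((w v * g v) • (w u • u) - (w u * g u) • (w v • v)) := by
        rw [Finset.sum_product]
        refine Finset.sum_congr rfl fun u hu => Finset.sum_congr rfl fun v hv => ?_
        rw [mul_smul, sub_smul_zeroCrossing (hAB u hu v hv)]
        module
    _ = _ := by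
        simp only [Finset.sum_sub_distrib, ← Finset.sum_smul, ← Finset.smul_sum]

theorem sum_smul_add_sum_smul_mem_convexHull_zeroCrossing [DecidableEq E] {A B : Finset E}
    {g : E →ᵃ[ℝ] ℝ} (hA : ∀ u ∈ A, g u ≤ 0) (hB : ∀ v ∈ B, 0 < g v) {w : E → ℝ}
    (hw₀ : ∀ y ∈ A ∪ B, 0 ≤ w y) (hw₁ : ∑ u ∈ A, w u + ∑ v ∈ B, w v = 1)
    (hgx : ∑ u ∈ A, w u * g u + ∑ v ∈ B, w v * g v ≤ 0) (hA₀ : ∑ u ∈ A, w u * g u < 0) :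
    ∑ u ∈ A, w u • u + ∑ v ∈ B, w v • v ∈
      convexHull ℝ (↑(A ∪ (A ×ˢ B).image fun q => g.zeroCrossing q.1 q.2) : Set E) := by
  set D := -∑ u ∈ A, w u * g u
  set ε := ∑ v ∈ B, w v * g v
  have hD : 0 < D := neg_pos.2 hA₀
  have hpair := AffineMap.sum_product_smul_zeroCrossing
    (fun u hu v hv => ((hA u hu).trans_lt (hB v hv)).ne) w
  -- Since `(g v - g u) • zeroCrossing u v = g v • u - g u • v`, the crossing points with weights
  -- `w u * w v * (g v - g u) / D` absorb all of the `B`-part and an `ε / D` share of the `A`-part.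
  have hcomb : ∑ u ∈ A, w u • u + ∑ v ∈ B, w v • v =
      ∑ i ∈ A.disjSum (A ×ˢ B), Sum.elim (fun u => (1 - ε / D) * w u)
        (fun q => D⁻¹ * (w q.1 * w q.2 * (g q.2 - g q.1))) i •
        Sum.elim _root_.id (fun q => g.zeroCrossing q.1 q.2) i := by
    have hscale : ∀ (c : ℝ) {ι : Type _} (s : Finset ι) (r : ι → ℝ) (z : ι → E),
        ∑ i ∈ s, (c * r i) • z i = c • ∑ i ∈ s, r i • z i := fun c _ s r z => by
      simp_rw [Finset.smul_sum, smul_smul]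
    rw [Finset.sum_disjSum]
    simp only [Sum.elim_inl, Sum.elim_inr, _root_.id]
    have hDinv : D⁻¹ * ∑ u ∈ A, w u * g u = -1 := by
      rw [show ∑ u ∈ A, w u * g u = -D by simp [D], mul_neg, inv_mul_cancel₀ hD.ne']
    rw [hscale, hscale, hpair, smul_sub, smul_smul, smul_smul, hDinv]
    module
  rw [hcomb]
  refine (convex_convexHull ℝ _).sum_mem ?_ ?_ ?_
  · rintro (u | ⟨u, v⟩) hi <;> simp only [Finset.inl_mem_disjSum, Finset.inr_mem_disjSum,
      Finset.mem_product] at hi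
    · exact mul_nonneg (sub_nonneg.2 ((div_le_one hD).2 (by linarith)))
        (hw₀ u (by simp [hi]))
    · exact mul_nonneg (inv_nonneg.2 hD.le) (mul_nonneg (mul_nonneg (hw₀ u (by simp [hi.1]))
        (hw₀ v (by simp [hi.2]))) (by linarith [hA u hi.1, hB v hi.2]))
  · rw [Finset.sum_disjSum]
    simp only [Sum.elim_inl, Sum.elim_inr, ← Finset.mul_sum, sum_product_mul_mul_sub]
    field_simp
    linear_combination D * hw₁
  · rintro (u | ⟨u, v⟩) hi <;> simp only [Finset.inl_mem_disjSum, Finset.inr_mem_disjSum,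
      Finset.mem_product] at hi <;> refine subset_convexHull ℝ _ ?_
    · simp [hi]
    · simp only [Finset.coe_union, Finset.coe_image, Set.mem_union, Set.mem_image]
      exact Or.inr ⟨(u, v), by simpa using hi, rfl⟩

theorem mem_convexHull_union_zeroCrossing [DecidableEq E] {A B : Finset E} {g : E →ᵃ[ℝ] ℝ}
    (hA : ∀ u ∈ A, g u ≤ 0) (hB : ∀ v ∈ B, 0 < g v) {x : E}
    (hx : x ∈ convexHull ℝ (↑(A ∪ B) : Set E)) (hgx : g x ≤ 0) :
    x ∈ convexHull ℝ (↑(A ∪ (A ×ˢ B).image fun q => g.zeroCrossing q.1 q.2) : Set E) := by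
  have hAB : Disjoint A B :=
    Finset.disjoint_left.2 fun y hyA hyB => (hA y hyA).not_gt (hB y hyB)
  obtain ⟨w, hw₀, hw₁, rfl⟩ := Finset.mem_convexHull'.1 hx
  rw [g.map_sum_smul hw₁, Finset.sum_union hAB] at hgx
  rw [Finset.sum_union hAB] at hw₁ ⊢
  simp only [smul_eq_mul] at hgx
  have hB₀ : ∀ v ∈ B, 0 ≤ w v * g v := fun v hv => mul_nonneg (hw₀ v (by simp [hv])) (hB v hv).le
  have hA₀ : ∑ u ∈ A, w u * g u ≤ 0 := by linarith [Finset.sum_nonneg hB₀]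
  rcases hA₀.lt_or_eq with hA₀ | hA₀
  · exact sum_smul_add_sum_smul_mem_convexHull_zeroCrossing hA hB hw₀ hw₁ hgx hA₀
  have hwB : ∀ v ∈ B, w v = 0 := fun v hv =>
    (mul_eq_zero.1 ((Finset.sum_eq_zero_iff_of_nonneg hB₀).1
      (le_antisymm (by linarith) (Finset.sum_nonneg hB₀)) v hv)).resolve_right (hB v hv).ne'
  rw [Finset.sum_eq_zero (s := B) fun v hv => by rw [hwB v hv, zero_smul], add_zero]
  rw [Finset.sum_eq_zero hwB, add_zero] at hw₁
  exact convexHull_mono (by simp) (Finset.mem_convexHull'.2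
    ⟨w, fun u hu => hw₀ u (by simp [hu]), hw₁, rfl⟩)

end Halfspace

namespace IsPolytope

variable {E F : Type*} [AddCommGroup E] [Module ℝ E] [AddCommGroup F] [Module ℝ F]

theorem image {S : Set E} (hS : IsPolytope S) (f : E →ᵃ[ℝ] F) : IsPolytope (f '' S) := by
  classical
  obtain ⟨V, rfl⟩ := hS
  exact ⟨V.image f, by rw [f.image_convexHull, Finset.coe_image]⟩

theorem prod {S : Set E} {T : Set F} (hS : IsPolytope S) (hT : IsPolytope T) :
    IsPolytope (S ×ˢ T) := by
  obtain ⟨V, rfl⟩ := hS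
  obtain ⟨W, rfl⟩ := hT
  exact ⟨V ×ˢ W, by rw [Finset.coe_product, convexHull_prod]⟩

theorem inter_halfspace {S : Set E} (hS : IsPolytope S) (g : E →ᵃ[ℝ] ℝ) :
    IsPolytope (S ∩ {y | g y ≤ 0}) := by
  classical
  obtain ⟨V, rfl⟩ := hS
  set A := V.filter (g · ≤ 0)
  set B := V.filter (0 < g ·)
  have hA : ∀ u ∈ A, g u ≤ 0 := fun u hu => (Finset.mem_filter.1 hu).2
  have hB : ∀ v ∈ B, 0 < g v := fun v hv => (Finset.mem_filter.1 hv).2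
  refine ⟨A ∪ (A ×ˢ B).image fun q => g.zeroCrossing q.1 q.2, subset_antisymm ?_ ?_⟩
  · rintro x ⟨hx, hgx⟩
    have hV : V = A ∪ B := by ext y; simp [A, B, ← and_or_left, le_or_gt]
    rw [hV] at hx
    exact mem_convexHull_union_zeroCrossing hA hB hx hgx
  · refine convexHull_min ?_ ((convex_convexHull ℝ _).inter ((convex_Iic 0).affine_preimage g))
    intro y hy
    simp only [Finset.coe_union, Finset.coe_image, Set.mem_union, Set.mem_image,
      Finset.mem_coe, Finset.mem_product] at hy
    rcases hy with hy | ⟨⟨u, v⟩, ⟨hu, hv⟩, rfl⟩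
    · exact ⟨subset_convexHull ℝ _ (Finset.mem_filter.1 hy).1, hA y hy⟩
    · refine ⟨segment_subset_convexHull (Finset.mem_filter.1 hu).1 (Finset.mem_filter.1 hv).1
        (AffineMap.zeroCrossing_mem_segment (hA u hu) (hB v hv)), ?_⟩
      exact (AffineMap.apply_zeroCrossing ((hA u hu).trans_lt (hB v hv)).ne).le

theorem inter_iInter_of_forall {ι : Type*} [Finite ι] {T : ι → Set E}
    (h : ∀ S i, IsPolytope S → IsPolytope (S ∩ T i)) {S : Set E} (hS : IsPolytope S) :
    IsPolytope (S ∩ ⋂ i, T i) := by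
  classical
  have := Fintype.ofFinite ι
  suffices ∀ s : Finset ι, IsPolytope (S ∩ ⋂ i ∈ s, T i) by simpa using this Finset.univ
  intro s
  induction s using Finset.induction_on with
  | empty => simpa using hS
  | insert i s _ ih =>
    rw [Finset.set_biInter_insert, Set.inter_left_comm, Set.inter_comm]
    exact h _ i ih

theorem inter [FiniteDimensional ℝ E] {S T : Set E} (hS : IsPolytope S) (hT : IsPolytope T) :
    IsPolytope (S ∩ T) := by
  let b := Module.finBasis ℝ E
  let δ : Fin (Module.finrank ℝ E) → E × E →ᵃ[ℝ] ℝ := fun i =>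
    ((b.coord i).comp (LinearMap.fst ℝ E E - LinearMap.snd ℝ E E)).toAffineMap
  have hdiag : S ∩ T = (LinearMap.fst ℝ E E).toAffineMap ''
      ((S ×ˢ T ∩ ⋂ i, {q | δ i q ≤ 0}) ∩ ⋂ i, {q | (-δ i) q ≤ 0}) := by
    ext x
    constructor
    · rintro ⟨hxS, hxT⟩
      exact ⟨(x, x), ⟨⟨⟨hxS, hxT⟩, by simp [δ]⟩, by simp [δ]⟩, rfl⟩
    · rintro ⟨⟨y, z⟩, ⟨⟨⟨hy, hz⟩, hle⟩, hge⟩, rfl⟩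
      have hyz : y = z := b.ext_elem_iff.2 fun i => by
        have h₁ := Set.mem_iInter.1 hle i
        have h₂ := Set.mem_iInter.1 hge i
        simp [δ] at h₁ h₂
        linarith
      exact ⟨hy, hyz ▸ hz⟩
  rw [hdiag]
  have hcut := ((hS.prod hT).inter_iInter_of_forall fun _ i h => h.inter_halfspace (δ i))
  exact (hcut.inter_iInter_of_forall fun _ i h => h.inter_halfspace (-δ i)).image _

end IsPolytope

section PiecewiseLinear

universe u

variable {E : Type*} [AddCommGroup E] [Module ℝ E] [FiniteDimensional ℝ E] {Ω : Set E}

theorem IsPolytope.exists_cover_affine_of_isPWLOn (hΩ : IsPolytope Ω) {ι : Type u} [Finite ι]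
    {h : ι → E → ℝ} (hh : ∀ i, IsPWLOn Ω (h i)) :
    ∃ (κ : Type u) (_ : Finite κ) (C : κ → Set E) (a : κ → ι → E →ᵃ[ℝ] ℝ),
      (∀ m, IsPolytope (C m)) ∧ (⋃ m, C m) = Ω ∧ ∀ m i, ∀ x ∈ C m, h i x = a m i x := by
  choose k C hC hcov hrep using hh
  choose g hg using hrep
  refine ⟨∀ i, Fin (k i), inferInstance, fun σ => Ω ∩ ⋂ i, C i (σ i), fun σ i => g i (σ i),
    fun σ => hΩ.inter_iInter_of_forall (fun _ i hS => hS.inter (hC i (σ i))), ?_,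
    fun σ i x hx => hg i (σ i) x (Set.mem_iInter.1 hx.2 i)⟩
  refine subset_antisymm (Set.iUnion_subset fun σ => Set.inter_subset_left) fun x hx => ?_
  have hxC : ∀ i, ∃ m, x ∈ C i m := fun i => Set.mem_iUnion.1 ((hcov i).symm ▸ hx)
  choose σ hσ using hxC
  exact Set.mem_iUnion.2 ⟨σ, hx, Set.mem_iInter.2 hσ⟩

theorem IsPolytope.exists_cover_affine_minorant (hΩ : IsPolytope Ω) {ι : Type u} [Finite ι]
    {f ρ : ι → E → ℝ} (hf : ∀ j, IsPWLOn Ω (f j)) (hρ : ∀ j, IsPWLOn Ω (ρ j)) {Ψ : E → ℝ}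
    (hΨ : ∀ ω ∈ Ω, IsGreatest {y : ℝ | ∃ j, (∀ j', f j' ω ≤ f j ω) ∧ y = ρ j ω} (Ψ ω)) :
    ∃ (κ : Type u) (_ : Finite κ) (C : κ → Set E) (a : κ → E →ᵃ[ℝ] ℝ),
      (∀ t, IsPolytope (C t)) ∧ (∀ t, C t ⊆ Ω) ∧ (∀ t, ∀ x ∈ C t, a t x ≤ Ψ x) ∧
      ∀ x ∈ Ω, ∃ t, x ∈ C t ∧ Ψ x = a t x := by
  obtain ⟨κ, _, C, a, hC, hcov, ha⟩ :=
    hΩ.exists_cover_affine_of_isPWLOn (h := Sum.elim f ρ) (Sum.rec hf hρ)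
  have hCΩ : ∀ m, C m ⊆ Ω := fun m => hcov ▸ Set.subset_iUnion C m
  let cell : κ × ι → Set E := fun t =>
    C t.1 ∩ ⋂ j', {x | (a t.1 (.inl j') - a t.1 (.inl t.2)) x ≤ 0}
  have hargmax : ∀ t, ∀ x ∈ cell t, ∀ j', f j' x ≤ f t.2 x := fun t x hx j' => by
    have hx' := Set.mem_iInter.1 hx.2 j'
    simp only [Set.mem_ofPred_eq, AffineMap.coe_sub, Pi.sub_apply, sub_nonpos] at hx'
    rwa [← ha t.1 (.inl j') x hx.1, ← ha t.1 (.inl t.2) x hx.1] at hx'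
  refine ⟨κ × ι, inferInstance, cell, fun t => a t.1 (.inr t.2),
    fun t => (hC t.1).inter_iInter_of_forall (fun _ _ hS => hS.inter_halfspace _),
    fun t => Set.inter_subset_left.trans (hCΩ t.1), fun t x hx => ?_, fun x hx => ?_⟩
  · rw [← ha t.1 (.inr t.2) x hx.1]
    exact (hΨ x (hCΩ t.1 hx.1)).2 ⟨t.2, hargmax t x hx, rfl⟩
  · obtain ⟨j, hjmax, hΨx⟩ := (hΨ x hx).1
    obtain ⟨m, hm⟩ := Set.mem_iUnion.1 (hcov.symm ▸ hx)
    refine ⟨(m, j), ⟨hm, Set.mem_iInter.2 fun j' => ?_⟩, hΨx.trans (ha m (.inr j) x hm)⟩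
    simp only [Set.mem_ofPred_eq, AffineMap.coe_sub, Pi.sub_apply, sub_nonpos]
    rw [← ha m (.inl j') x hm, ← ha m (.inl j) x hm]
    exact hjmax j'

end PiecewiseLinear

section ConcaveClosure

variable {E : Type*}

def belowSet (D : Set (E × ℝ)) : Set (E × ℝ) :=
  {q | ∃ y, (q.1, y) ∈ D ∧ q.2 ≤ y}

theorem Convex.belowSet [AddCommGroup E] [Module ℝ E] {D : Set (E × ℝ)} (hD : Convex ℝ D) :
    Convex ℝ (belowSet D) := by
  rintro q₁ ⟨y₁, hy₁, hq₁⟩ q₂ ⟨y₂, hy₂, hq₂⟩ s t hs ht hst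
  refine ⟨s * y₁ + t * y₂, by simpa using hD hy₁ hy₂ hs ht hst, ?_⟩
  simp only [Prod.snd_add, Prod.smul_snd, smul_eq_mul]
  gcongr

theorem exists_finset_graph_mem_belowSet [AddCommGroup E] [Module ℝ E] {κ : Type*} [Finite κ]
    {Ω : Set E} {Ψ : E → ℝ} {C : κ → Set E} {a : κ → E →ᵃ[ℝ] ℝ} (hC : ∀ t, IsPolytope (C t))
    (hCΩ : ∀ t, C t ⊆ Ω) (ha : ∀ t, ∀ x ∈ C t, a t x ≤ Ψ x)
    (hcover : ∀ x ∈ Ω, ∃ t, x ∈ C t ∧ Ψ x = a t x) :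
    ∃ P : Finset E, ↑P ⊆ Ω ∧
      ∀ x ∈ Ω, (x, Ψ x) ∈ belowSet (convexHull ℝ ((fun p => (p, Ψ p)) '' ↑P)) := by
  classical
  have := Fintype.ofFinite κ
  choose V hV using hC
  have hVC : ∀ t, ∀ v ∈ V t, v ∈ C t := fun t v hv => hV t ▸ subset_convexHull ℝ _ hv
  set P := Finset.univ.biUnion V
  refine ⟨P, fun p hp => ?_, fun x hx => ?_⟩
  · obtain ⟨t, -, hpt⟩ := Finset.mem_biUnion.1 hp
    exact hCΩ t (hVC t p hpt)
  obtain ⟨t, hxt, hΨx⟩ := hcover x hx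
  let G : E →ᵃ[ℝ] E × ℝ := (AffineMap.id ℝ E).prod (a t)
  have hGV : G '' ↑(V t) ⊆ belowSet (convexHull ℝ ((fun p => (p, Ψ p)) '' ↑P)) := by
    rintro _ ⟨v, hv, rfl⟩
    exact ⟨Ψ v, subset_convexHull ℝ _ ⟨v, Finset.mem_biUnion.2 ⟨t, Finset.mem_univ _, hv⟩, rfl⟩,
      ha t v (hVC t v hv)⟩
  have hGx : (x, Ψ x) ∈ G '' convexHull ℝ ↑(V t) := ⟨x, hV t ▸ hxt, by simp [G, hΨx]⟩
  rw [G.image_convexHull] at hGx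
  exact convexHull_min hGV (convex_convexHull ℝ _).belowSet hGx

theorem isGreatest_cav_of_forall_mem_belowSet [NormedAddCommGroup E] [NormedSpace ℝ E]
    {Ω : Set E} {Ψ : E → ℝ} {P : Finset E} (hPΩ : ↑P ⊆ Ω)
    (hP : ∀ x ∈ Ω, (x, Ψ x) ∈ belowSet (convexHull ℝ ((fun p => (p, Ψ p)) '' ↑P)))
    {ω : E} (hω : ω ∈ Ω) :
    IsGreatest {y | (ω, y) ∈ convexHull ℝ ((fun p => (p, Ψ p)) '' ↑P)} (cav Ω Ψ ω) := by
  set D := convexHull ℝ ((fun p => (p, Ψ p)) '' (P : Set E))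
  have hD : IsCompact D := (P.finite_toSet.image _).isCompact_convexHull (𝕜 := ℝ)
  obtain ⟨m, hm⟩ : ∃ m, IsGreatest {y | (ω, y) ∈ D} m := by
    have hfiber : {y | (ω, y) ∈ D} = Prod.snd '' (D ∩ Prod.fst ⁻¹' {ω}) := by
      ext y
      exact ⟨fun hy => ⟨(ω, y), ⟨hy, rfl⟩, rfl⟩, by rintro ⟨⟨_, _⟩, ⟨hq, rfl⟩, rfl⟩; exact hq⟩
    obtain ⟨y, hy, -⟩ := hP ω hω
    rw [hfiber]
    exact ((hD.inter_right (isClosed_singleton.preimage continuous_fst)).image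
      continuous_snd).exists_isGreatest ⟨y, ⟨(ω, y), ⟨hy, rfl⟩, rfl⟩⟩
  set graph := {p : E × ℝ | p.1 ∈ Ω ∧ p.2 = Ψ p.1}
  have hDgraph : D ⊆ convexHull ℝ graph :=
    convexHull_mono (by rintro _ ⟨p, hp, rfl⟩; exact ⟨hPΩ hp, rfl⟩)
  have hgraph : convexHull ℝ graph ⊆ belowSet D :=
    convexHull_min (fun q ⟨hq, hqΨ⟩ => by rw [← Prod.mk.eta (p := q), hqΨ]; exact hP _ hq)
      (convex_convexHull ℝ _).belowSet
  have hmax : IsGreatest {z | (ω, z) ∈ convexHull ℝ graph} m := by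
    refine ⟨hDgraph hm.1, fun z hz => ?_⟩
    obtain ⟨y, hy, hzy⟩ := hgraph hz
    exact hzy.trans (hm.2 hy)
  rwa [cav, hmax.csSup_eq]

end ConcaveClosure

theorem cav_eq_max_over_finite_hull_general {d k : ℕ} (Ω : Set (Fin d → ℝ))
    (hΩ : IsPolytope Ω) (f ρ : Fin k → (Fin d → ℝ) → ℝ)
    (hf : ∀ j, IsPWLOn Ω (f j) ∧ ContinuousOn (f j) Ω)
    (hρ : ∀ j, IsPWLOn Ω (ρ j) ∧ ContinuousOn (ρ j) Ω)
    (Ψ : (Fin d → ℝ) → ℝ)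
    (hΨ : ∀ ω ∈ Ω,
      IsGreatest {y : ℝ | ∃ j, (∀ j', f j' ω ≤ f j ω) ∧ y = ρ j ω} (Ψ ω)) :
    ∃ P : Finset (Fin d → ℝ), (P : Set (Fin d → ℝ)) ⊆ Ω ∧ ∀ ω ∈ Ω,
      IsGreatest {y : ℝ | (ω, y) ∈
        convexHull ℝ ((fun p => (p, Ψ p)) '' (P : Set (Fin d → ℝ)))} (cav Ω Ψ ω) := by
  obtain ⟨κ, _, C, a, hC, hCΩ, ha, hcover⟩ :=
    hΩ.exists_cover_affine_minorant (fun j => (hf j).1) (fun j => (hρ j).1) hΨ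
  obtain ⟨P, hPΩ, hP⟩ := exists_finset_graph_mem_belowSet hC hCΩ ha hcover
  exact ⟨P, hPΩ, fun ω hω => isGreatest_cav_of_forall_mem_belowSet hPΩ hP hω⟩

/-- There is a finite set `P ⊆ Ω` such that, for every `ω ∈ Ω`, the fiber over `ω` of the
convex hull of `{(p, Ψ(p)) : p ∈ P}` is nonempty and its maximum equals `cav(Ψ)(ω)`. -/
theorem cav_eq_max_over_finite_hull {d k : ℕ} (hk : 0 < k) (Ω : Set (Fin d → ℝ))
    (hΩ : IsPolytope Ω) (f ρ : Fin k → (Fin d → ℝ) → ℝ)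
    (hf : ∀ j, IsPWLOn Ω (f j) ∧ ContinuousOn (f j) Ω)
    (hρ : ∀ j, IsPWLOn Ω (ρ j) ∧ ContinuousOn (ρ j) Ω)
    (Ψ : (Fin d → ℝ) → ℝ)
    (hΨ : ∀ ω ∈ Ω,
      IsGreatest {y : ℝ | ∃ j, (∀ j', f j' ω ≤ f j ω) ∧ y = ρ j ω} (Ψ ω)) :
    ∃ P : Finset (Fin d → ℝ), (P : Set (Fin d → ℝ)) ⊆ Ω ∧ ∀ ω ∈ Ω,
      IsGreatest {y : ℝ | (ω, y) ∈
        convexHull ℝ ((fun p => (p, Ψ p)) '' (P : Set (Fin d → ℝ)))} (cav Ω Ψ ω) :=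
  cav_eq_max_over_finite_hull_general Ω hΩ f ρ hf hρ Ψ hΨ
end

section
/- Let X be a finite set, π ∈ Δ(X), and let η be a finitely supported probability distribution on Δ(X). Then there exist a finite message set M and an experiment σ : X → Δ(M) that induces η from π if and only if π is the barycenter of η, i.e., π = Σ_{π̃ ∈ supp(η)} η(π̃) · π̃. -/
open Finset

/-!
If `σ` induces `η`, then `η` is the image of the distribution of messages under
`m ↦ ξ(π, σ, m)`, and the probability `P(m)` of the message `m` satisfies
`P(m) • ξ(π, σ, m) = (x ↦ π x σ(m|x))`; summing over the messages gives back `π`.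
Conversely, if `π = ∑ η(q) • q`, take the support of `η` as message set and send message `q`
in state `x` with probability `σ(q|x) = η(q) q(x) / π(x)`: the message `q` then has
probability `η(q)` and posterior `q`.
-/

noncomputable section

namespace BayesianPersuasion

variable {X M : Type}

def messageProb [Fintype X] (π : X → ℝ) (σ : X → M → ℝ) (m : M) : ℝ := ∑ x, π x * σ x m

/-- The Bayes update `ξ(π, σ, m)`; junk (`0`) when `m` has probability zero. -/
def posterior [Fintype X] (π : X → ℝ) (σ : X → M → ℝ) (m : M) : X → ℝ :=
  fun x => π x * σ x m / messageProb π σ m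

def inducedDist [Fintype X] [Fintype M] (π : X → ℝ) (σ : X → M → ℝ) (q : X → ℝ) : ℝ :=
  ∑ m, if q = posterior π σ m then messageProb π σ m else 0

section Forward

variable [Fintype X] {π : X → ℝ} {σ : X → M → ℝ}

theorem messageProb_nonneg (hπ : 0 ≤ π) (hσ : ∀ x, 0 ≤ σ x) (m : M) :
    0 ≤ messageProb π σ m :=
  sum_nonneg fun x _ => mul_nonneg (hπ x) (hσ x m)

theorem messageProb_smul_posterior (hπ : 0 ≤ π) (hσ : ∀ x, 0 ≤ σ x) (m : M) :
    messageProb π σ m • posterior π σ m = fun x => π x * σ x m := by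
  funext x
  by_cases h : messageProb π σ m = 0
  · have hx : π x * σ x m = 0 :=
      (sum_eq_zero_iff_of_nonneg fun x _ => mul_nonneg (hπ x) (hσ x m)).mp h x (mem_univ x)
    simp [h, hx]
  · simp [posterior, mul_div_cancel₀ _ h]

theorem sum_messageProb_smul_posterior [Fintype M] (hπ : 0 ≤ π)
    (hσ : ∀ x, σ x ∈ stdSimplex ℝ M) :
    ∑ m, messageProb π σ m • posterior π σ m = π := by
  funext x
  simp only [messageProb_smul_posterior hπ (fun x => (hσ x).1), Finset.sum_apply]
  rw [← mul_sum, (hσ x).2, mul_one]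

theorem messageProb_le_inducedDist [Fintype M] (hπ : 0 ≤ π) (hσ : ∀ x, 0 ≤ σ x) (m : M) :
    messageProb π σ m ≤ inducedDist π σ (posterior π σ m) := by
  have hnonneg : ∀ m' ∈ univ, 0 ≤ if posterior π σ m = posterior π σ m'
      then messageProb π σ m' else 0 := fun m' _ => by
    split_ifs
    exacts [messageProb_nonneg hπ hσ m', le_rfl]
  calc messageProb π σ m
      = if posterior π σ m = posterior π σ m then messageProb π σ m else 0 := (if_pos rfl).symm
    _ ≤ inducedDist π σ (posterior π σ m) := single_le_sum hnonneg (mem_univ m)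

theorem sum_inducedDist_smul [Fintype M] {S : Finset (X → ℝ)} (hπ : 0 ≤ π)
    (hσ : ∀ x, σ x ∈ stdSimplex ℝ M) (hsupp : ∀ q ∉ S, inducedDist π σ q = 0) :
    ∑ q ∈ S, inducedDist π σ q • q = π := by
  have hmass : ∀ m, posterior π σ m ∉ S → messageProb π σ m = 0 := fun m hm =>
    le_antisymm (hsupp _ hm ▸ messageProb_le_inducedDist hπ (fun x => (hσ x).1) m)
      (messageProb_nonneg hπ (fun x => (hσ x).1) m)
  calc ∑ q ∈ S, inducedDist π σ q • q
      = ∑ m, ∑ q ∈ S, if q = posterior π σ m then messageProb π σ m • q else 0 := by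
        simp only [inducedDist, sum_smul, ite_smul, zero_smul]
        exact sum_comm
    _ = ∑ m, messageProb π σ m • posterior π σ m := by
        refine sum_congr rfl fun m _ => ?_
        rw [sum_ite_eq']
        split_ifs with hm
        · rfl
        · rw [hmass m hm, zero_smul]
    _ = π := sum_messageProb_smul_posterior hπ hσ

end Forward

section Backward

variable {π : X → ℝ} {S : Finset (X → ℝ)} {η : (X → ℝ) → ℝ}

theorem apply_eq_sum_mul_of_eq_sum_smul (hbary : π = ∑ q ∈ S, η q • q) (x : X) :
    π x = ∑ q ∈ S, η q * q x := by
  simp [hbary, Finset.sum_apply]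

/-- In a null state `x` the message is drawn according to `η`; any distribution would do there,
since null states do not affect the induced distribution. -/
def splittingExperiment (π : X → ℝ) (S : Finset (X → ℝ)) (η : (X → ℝ) → ℝ) :
    X → S → ℝ :=
  fun x q => if π x = 0 then η q else η q * q.1 x / π x

theorem mul_splittingExperiment (hS : ∀ q ∈ S, 0 ≤ q) (hη0 : ∀ q, 0 ≤ η q)
    (hbary : π = ∑ q ∈ S, η q • q) (x : X) (q : S) :
    π x * splittingExperiment π S η x q = η q * q.1 x := by
  unfold splittingExperiment
  split_ifs with hx
  · have hterm := (sum_eq_zero_iff_of_nonneg fun q hq => mul_nonneg (hη0 q) (hS q hq x)).mp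
      (apply_eq_sum_mul_of_eq_sum_smul hbary x ▸ hx) q q.2
    rw [hx, zero_mul, hterm]
  · exact mul_div_cancel₀ _ hx

theorem splittingExperiment_mem_stdSimplex (hπ : 0 ≤ π) (hS : ∀ q ∈ S, 0 ≤ q)
    (hη0 : ∀ q, 0 ≤ η q) (hsum : ∑ q ∈ S, η q = 1) (hbary : π = ∑ q ∈ S, η q • q) (x : X) :
    splittingExperiment π S η x ∈ stdSimplex ℝ S := by
  refine ⟨fun q => ?_, ?_⟩
  · unfold splittingExperiment
    split_ifs
    exacts [hη0 q, div_nonneg (mul_nonneg (hη0 q) (hS q q.2 x)) (hπ x)]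
  · unfold splittingExperiment
    rw [sum_coe_sort S (fun q => if π x = 0 then η q else η q * q x / π x)]
    split_ifs with hx
    · exact hsum
    · rw [← sum_div, ← apply_eq_sum_mul_of_eq_sum_smul hbary x, div_self hx]

variable [Fintype X] (hS : ∀ q ∈ S, q ∈ stdSimplex ℝ X) (hη0 : ∀ q, 0 ≤ η q)
  (hbary : π = ∑ q ∈ S, η q • q)
include hS hη0 hbary

theorem messageProb_splittingExperiment (q : S) :
    messageProb π (splittingExperiment π S η) q = η q := by
  simp only [messageProb, mul_splittingExperiment (fun q hq => (hS q hq).1) hη0 hbary, ← mul_sum,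
    (hS q q.2).2, mul_one]

theorem posterior_splittingExperiment (q : S) (hq : η q ≠ 0) :
    posterior π (splittingExperiment π S η) q = q := by
  funext x
  rw [posterior, messageProb_splittingExperiment hS hη0 hbary,
    mul_splittingExperiment (fun q hq => (hS q hq).1) hη0 hbary, mul_div_cancel_left₀ _ hq]

theorem inducedDist_splittingExperiment (hsupp : ∀ q ∉ S, η q = 0) (q : X → ℝ) :
    inducedDist π (splittingExperiment π S η) q = η q := by
  have hterm : ∀ m : S, (if q = posterior π (splittingExperiment π S η) m
      then messageProb π (splittingExperiment π S η) m else 0) = if q = m then η m else 0 := by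
    intro m
    rw [messageProb_splittingExperiment hS hη0 hbary]
    by_cases hm : η m = 0
    · simp [hm]
    · rw [posterior_splittingExperiment hS hη0 hbary m hm]
  rw [inducedDist, sum_congr rfl fun m _ => hterm m,
    sum_coe_sort S (fun m => if q = m then η m else 0), sum_ite_eq]
  split_ifs with hq
  · rfl
  · exact (hsupp q hq).symm

end Backward

end BayesianPersuasion

end

open BayesianPersuasion in
theorem inducible_iff_barycenter_general {X : Type} [Fintype X]
    (π : X → ℝ) (hπ : π ∈ stdSimplex ℝ X)
    (S : Finset (X → ℝ)) (η : (X → ℝ) → ℝ)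
    (hS : ∀ q ∈ S, q ∈ stdSimplex ℝ X)
    (hη0 : ∀ q, 0 ≤ η q) (hsupp : ∀ q ∉ S, η q = 0) (hsum : (∑ q ∈ S, η q) = 1) :
    (∃ (M : Type) (_ : Fintype M) (σ : X → M → ℝ),
      (∀ x, σ x ∈ stdSimplex ℝ M) ∧
      (∀ q : X → ℝ, η q = ∑ m : M,
        if q = (fun x => π x * σ x m / ∑ x', π x' * σ x' m)
        then (∑ x, σ x m * π x) else 0))
    ↔ π = ∑ q ∈ S, η q • q := by
  have hinduced : ∀ (M : Type) [Fintype M] (σ : X → M → ℝ) (q : X → ℝ),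
      (∑ m : M, if q = (fun x => π x * σ x m / ∑ x', π x' * σ x' m)
        then (∑ x, σ x m * π x) else 0) = inducedDist π σ q := fun M _ σ q => by
    simp only [mul_comm (σ _ _) (π _)]
    rfl
  simp only [hinduced]
  constructor
  · rintro ⟨M, _, σ, hσ, hη⟩
    obtain rfl : η = inducedDist π σ := funext hη
    exact (sum_inducedDist_smul hπ.1 hσ hsupp).symm
  · intro hbary
    refine ⟨S, inferInstance, splittingExperiment π S η,
      splittingExperiment_mem_stdSimplex hπ.1 (fun q hq => (hS q hq).1) hη0 hsum hbary,
      fun q => (inducedDist_splittingExperiment hS hη0 hbary hsupp q).symm⟩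

/-- A finitely supported distribution `η` (with support in `S`) over posteriors is
inducible from the prior `π` by an experiment `σ : X → Δ(M)` iff `π` is the
barycenter of `η`. -/
theorem inducible_iff_barycenter {X : Type} [Fintype X] [Nonempty X]
    (π : X → ℝ) (hπ : π ∈ stdSimplex ℝ X)
    (S : Finset (X → ℝ)) (η : (X → ℝ) → ℝ)
    (hS : ∀ q ∈ S, q ∈ stdSimplex ℝ X)
    (hη0 : ∀ q, 0 ≤ η q) (hsupp : ∀ q ∉ S, η q = 0) (hsum : (∑ q ∈ S, η q) = 1) :
    (∃ (M : Type) (_ : Fintype M) (σ : X → M → ℝ),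
      (∀ x, σ x ∈ stdSimplex ℝ M) ∧
      (∀ q : X → ℝ, η q = ∑ m : M,
        if q = (fun x => π x * σ x m / ∑ x', π x' * σ x' m)
        then (∑ x, σ x m * π x) else 0))
    ↔ π = ∑ q ∈ S, η q • q :=
  inducible_iff_barycenter_general π hπ S η hS hη0 hsupp hsum
end

section
/- In the finite-horizon signal picking game described below, for every (pure) strategy profile g = (g^A, g^B), every time t ∈ {1, …, T}, and every history h_t^B that has positive probability under Pr^g, the conditional distribution of the state trajectory X_{1:t} given that history equals the strategy-independent belief μ_t^{*B}(h_t^B); likewise, for every history h_t^A with positive probability under Pr^g, the conditional distribution of X_{1:t} given h_t^A equals μ_t^{*A}(h_t^A). -/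
/- Under a pure strategy profile every history is a function of the realized messages, and the
messages can be read back from it, so the event of reaching a given history is either empty or
the event that a fixed prefix of messages is realized. Summing the trajectory probability backwards over the
unobserved future (every `σ_s(· | x)` and `P_s(· | x, u)` is a probability vector) shows that the
joint probability of `x_{0:t}` and the history is `weightA` / `weightB`: the recursions defining
`μ^{*A}`, `μ^{*B}` with the Bayes denominators dropped. Normalizing recovers `μ^{*A}`, `μ^{*B}`
because Bayes' rule commutes with rescaling: updating `c • μ` by a likelihood and normalizing
gives the same as updating `μ`. -/

open Finset
open scoped Classical

/-! Finite-horizon signal picking game (time is 0-indexed: stages `0, 1, …, T-1`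
correspond to stages `1, …, T` of the informal description). -/

/-- Prefix vectors: a choice of an element of `α s` for every stage `s < t`. -/
abbrev Pre (α : ℕ → Type) (t : ℕ) : Type := ∀ s : Fin t, α s

section SignalPicking

variable (X M U : ℕ → Type)

/-- An experiment at stage `t` is a kernel `σ_t : X_t → Δ(M_t)`, encoded as a matrix. -/
abbrev Sig (t : ℕ) : Type := X t → M t → ℝ

/-- The principal's history `h_t^A = (σ_{0:t-1}, m_{0:t-1}, u_{0:t-1})`. -/
abbrev HistA (t : ℕ) : Type := Pre (Sig X M) t × Pre M t × Pre U t

/-- The receiver's history `h_t^B = (h_t^A, σ_t, m_t)`. -/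
abbrev HistB (t : ℕ) : Type := HistA X M U t × Sig X M t × M t

/-- A (pure) strategy of the principal. -/
abbrev StratA : Type := ∀ t : ℕ, HistA X M U t → Sig X M t

/-- A (pure) strategy of the receiver. -/
abbrev StratB : Type := ∀ t : ℕ, HistB X M U t → U t

variable {X M U}

/-- The principal's history reached at stage `t` under the pure strategy profile
`(gA, gB)` when the realized messages are `mp`. -/
def reachA (gA : StratA X M U) (gB : StratB X M U) :
    ∀ t : ℕ, Pre M t → HistA X M U t
  | 0, _ => (fun s => s.elim0, fun s => s.elim0, fun s => s.elim0)
  | t + 1, mp =>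
    let h := reachA gA gB t (fun s => mp s.castSucc)
    let σ := gA t h
    let m := mp (Fin.last t)
    let u := gB t (h, σ, m)
    (Fin.snoc h.1 σ, Fin.snoc h.2.1 m, Fin.snoc h.2.2 u)

/-- The receiver's history reached at stage `t` (messages `m_{0:t}` realized). -/
def reachB (gA : StratA X M U) (gB : StratB X M U) (t : ℕ) (mp : Pre M (t + 1)) :
    HistB X M U t :=
  let h := reachA gA gB t (fun s => mp s.castSucc)
  (h, gA t h, mp (Fin.last t))

/-- The action taken at stage `t` under `(gA, gB)` given messages `m_{0:t}`. -/
def actOf (gA : StratA X M U) (gB : StratB X M U) (t : ℕ) (mp : Pre M (t + 1)) : U t :=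
  gB t (reachB gA gB t mp)

/-- Truncation of a length-`T` vector to a prefix of length `t ≤ T`. -/
def trunc {α : ℕ → Type} {T : ℕ} (v : Pre α T) (t : ℕ) (ht : t ≤ T) : Pre α t :=
  fun s => v ⟨s.1, lt_of_lt_of_le s.2 ht⟩

variable [∀ t, Fintype (X t)] [∀ t, Fintype (M t)]

/-- The probability under `Pr^g` of the trajectory `(x_{0:T-1}, m_{0:T-1})`:
`π̂(x_0) · ∏_t σ_t(m_t | x_t) · ∏_{t<T-1} P_t(x_{t+1} | x_t, u_t)`, where the experiments
`σ_t` and actions `u_t` are the ones generated by the pure strategy profile `(gA, gB)`. -/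
noncomputable def trajProb {T : ℕ} (hT : 0 < T) (phat : X 0 → ℝ)
    (P : ∀ t, X t → U t → X (t + 1) → ℝ)
    (gA : StratA X M U) (gB : StratB X M U)
    (x : Pre X T) (m : Pre M T) : ℝ :=
  phat (x ⟨0, hT⟩) *
    (∏ t : Fin T,
      gA t (reachA gA gB t (fun s : Fin t => m ⟨s.1, lt_trans s.2 t.2⟩)) (x t) (m t)) *
    (∏ t : Fin T,
      if h : (t : ℕ) + 1 < T then
        P t (x t)
          (actOf gA gB t (fun s : Fin ((t : ℕ) + 1) =>
            m ⟨s.1, lt_of_le_of_lt (Nat.lt_succ_iff.mp s.2) t.2⟩))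
          (x ⟨(t : ℕ) + 1, h⟩)
      else 1)

/-- The strategy-independent belief `μ_t^{*A} : H_t^A → Δ(X_{0:t})` of the principal,
defined recursively by the prior, Bayes updates and the transition kernels. -/
noncomputable def muA (phat : X 0 → ℝ) (P : ∀ t, X t → U t → X (t + 1) → ℝ) :
    ∀ t : ℕ, HistA X M U t → Pre X (t + 1) → ℝ
  | 0, _, xs => phat (xs 0)
  | t + 1, h, xs =>
    let hA : HistA X M U t :=
      (fun s => h.1 s.castSucc, fun s => h.2.1 s.castSucc, fun s => h.2.2 s.castSucc)
    let σ := h.1 (Fin.last t)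
    let m := h.2.1 (Fin.last t)
    let u := h.2.2 (Fin.last t)
    let xsp : Pre X (t + 1) := fun s => xs s.castSucc
    (muA phat P t hA xsp * σ (xsp (Fin.last t)) m /
        ∑ ys : Pre X (t + 1), muA phat P t hA ys * σ (ys (Fin.last t)) m) *
      P t (xs (Fin.last t).castSucc) u (xs (Fin.last (t + 1)))

/-- The strategy-independent belief `μ_t^{*B} : H_t^B → Δ(X_{0:t})` of the receiver:
the Bayes update of `μ_t^{*A}` by the experiment `σ_t` and the message `m_t`. -/
noncomputable def muB (phat : X 0 → ℝ) (P : ∀ t, X t → U t → X (t + 1) → ℝ)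
    (t : ℕ) (hb : HistB X M U t) : Pre X (t + 1) → ℝ :=
  fun xs =>
    muA phat P t hb.1 xs * hb.2.1 (xs (Fin.last t)) hb.2.2 /
      ∑ ys : Pre X (t + 1), muA phat P t hb.1 ys * hb.2.1 (ys (Fin.last t)) hb.2.2

end SignalPicking

section PrefixVectors

variable {α β : ℕ → Type} {T t : ℕ}

theorem trunc_succ (v : Pre α T) (h : t + 1 ≤ T) :
    trunc v (t + 1) h = Fin.snoc (trunc v t (by omega)) (v ⟨t, h⟩) := by
  funext s
  induction s using Fin.lastCases with
  | last => simp only [Fin.snoc_last]; rfl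
  | cast s => simp only [Fin.snoc_castSucc]; rfl

theorem trunc_succ_eq_snoc_iff (v : Pre α T) (h : t + 1 ≤ T) (p : Pre α t) (a : α t) :
    trunc v (t + 1) h = Fin.snoc p a ↔ trunc v t (by omega) = p ∧ v ⟨t, h⟩ = a := by
  rw [trunc_succ, Fin.snoc_inj]

theorem trunc_self (v : Pre α T) (h : T ≤ T) : trunc v T h = v :=
  rfl

theorem ite_trunc_and_eq_sum [∀ t, Fintype (α t)] (v : Pre α T) (h : t + 1 ≤ T) (p : Pre α t)
    (Q : Prop) [Decidable Q] (c : ℝ) :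
    (if trunc v t (by omega) = p ∧ Q then c else 0) =
      ∑ a : α t, if trunc v (t + 1) h = Fin.snoc p a ∧ Q then c else 0 := by
  simp [trunc_succ_eq_snoc_iff, ite_and]

theorem ite_trunc_and_trunc_eq_sum [∀ t, Fintype (α t)] [∀ t, Fintype (β t)] (v : Pre α T)
    (w : Pre β T) (h : t + 1 ≤ T) (p : Pre α t) (q : Pre β t) (c : ℝ) :
    (if trunc v t (by omega) = p ∧ trunc w t (by omega) = q then c else 0) =
      ∑ a : α t, ∑ b : β t,
        if trunc v (t + 1) h = Fin.snoc p a ∧ trunc w (t + 1) h = Fin.snoc q b then c else 0 := by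
  simp [trunc_succ_eq_snoc_iff, ite_and]

theorem sum_pre_succ [∀ t, Fintype (α t)] (F : Pre α (t + 1) → ℝ) :
    ∑ v, F v = ∑ p : Pre α t, ∑ a : α t, F (Fin.snoc p a) := by
  rw [← (Fin.snocEquiv fun s : Fin (t + 1) => α s).sum_comp, Fintype.sum_prod_type_right]
  rfl

theorem sum_sum_ite_eq_sum_trunc [∀ t, Fintype (α t)] [∀ t, Fintype (β t)]
    (f : Pre α T → Pre β T → ℝ) (C : Pre β T → Prop) [DecidablePred C] (ht : t ≤ T) :
    ∑ x, ∑ m, (if C m then f x m else 0) =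
      ∑ xb : Pre α t, ∑ x, ∑ m, if C m ∧ trunc x t ht = xb then f x m else 0 := by
  have split (x : Pre α T) (m : Pre β T) :
      (if C m then f x m else 0) = ∑ xb, if C m ∧ trunc x t ht = xb then f x m else 0 := by
    simp [ite_and]
  simp_rw [split]
  exact (Finset.sum_congr rfl fun _ _ => Finset.sum_comm).trans Finset.sum_comm

theorem sum_ite_and_trunc_eq_mul_sum_ite [∀ t, Fintype (α t)] [∀ t, Fintype (β t)]
    (f : Pre α T → Pre β T → ℝ) (C : Pre β T → Prop) [DecidablePred C] (ht : t ≤ T)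
    {J μ : Pre α t → ℝ}
    (hJ : ∀ xb, ∑ x, ∑ m, (if C m ∧ trunc x t ht = xb then f x m else 0) = J xb)
    (hμ : ∀ xb, J xb = μ xb * ∑ yb, J yb) (xb : Pre α t) :
    ∑ x, ∑ m, (if C m ∧ trunc x t ht = xb then f x m else 0) =
      μ xb * ∑ x, ∑ m, if C m then f x m else 0 := by
  rw [hJ, hμ, sum_sum_ite_eq_sum_trunc f C ht]
  simp_rw [hJ]

end PrefixVectors

theorem mul_eq_bayes_mul_sum {ι : Type*} [Fintype ι] {w μ ℓ : ι → ℝ}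
    (hw : ∀ i, w i = μ i * ∑ j, w j) (hwℓ : ∀ i, 0 ≤ w i * ℓ i) (i : ι) :
    w i * ℓ i = μ i * ℓ i / (∑ j, μ j * ℓ j) * ∑ j, w j * ℓ j := by
  have hsum : ∑ j, w j * ℓ j = (∑ j, w j) * ∑ j, μ j * ℓ j := by
    rw [Finset.mul_sum]
    exact Finset.sum_congr rfl fun j _ => by rw [hw j]; ring
  by_cases h0 : ∑ j, w j * ℓ j = 0
  · rw [h0, mul_zero]
    exact (Finset.sum_eq_zero_iff_of_nonneg fun j _ => hwℓ j).1 h0 i (Finset.mem_univ i)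
  · obtain ⟨hN, hS⟩ := mul_ne_zero_iff.1 (hsum ▸ h0)
    rw [hsum, hw i]
    field_simp

theorem Function.LeftInverse.apply_eq_iff_of_apply_eq {γ δ : Type*} {f : γ → δ}
    {g : δ → γ} (hgf : Function.LeftInverse g f) {d : δ} (hd : f (g d) = d) (c : γ) :
    f c = d ↔ c = g d :=
  ⟨fun h => h ▸ (hgf c).symm, fun h => h ▸ hd⟩

theorem Function.LeftInverse.apply_ne_of_apply_ne {γ δ : Type*} {f : γ → δ} {g : δ → γ}
    (hgf : Function.LeftInverse g f) {d : δ} (hd : f (g d) ≠ d) (c : γ) : f c ≠ d :=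
  fun h => hd (h ▸ congrArg f (hgf c))

/-- The receiver's history `h_t^B` that `h_{t+1}^A` extends. -/
def HistA.prevB {X M U : ℕ → Type} {t : ℕ} (h : HistA X M U (t + 1)) : HistB X M U t :=
  ((fun s => h.1 s.castSucc, fun s => h.2.1 s.castSucc, fun s => h.2.2 s.castSucc),
    h.1 (Fin.last t), h.2.1 (Fin.last t))

section Reach

variable {X M U : ℕ → Type} (gA : StratA X M U) (gB : StratB X M U)

theorem reachA_snd : ∀ (t : ℕ) (mp : Pre M t), (reachA gA gB t mp).2.1 = mp
  | 0, _ => funext fun s => s.elim0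
  | t + 1, mp => by
    simp only [reachA, reachA_snd t]
    exact Fin.snoc_init_self mp

theorem reachA_experiment_nonneg (hgA : ∀ t h x m, 0 ≤ gA t h x m) :
    ∀ (t : ℕ) (mp : Pre M t) (s : Fin t) x m, 0 ≤ (reachA gA gB t mp).1 s x m
  | 0, _, s => s.elim0
  | t + 1, mp, s => by
    induction s using Fin.lastCases with
    | last => intro x m; simpa only [reachA, Fin.snoc_last] using hgA t _ x m
    | cast s =>
      intro x m
      simpa only [reachA, Fin.snoc_castSucc] using reachA_experiment_nonneg hgA t _ s x m

theorem prevB_reachA_succ (t : ℕ) (mp : Pre M (t + 1)) :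
    (reachA gA gB (t + 1) mp).prevB = reachB gA gB t mp := by
  simp [HistA.prevB, reachA, reachB]

theorem reachA_succ_action_last (t : ℕ) (mp : Pre M (t + 1)) :
    (reachA gA gB (t + 1) mp).2.2 (Fin.last t) = actOf gA gB t mp := by
  simp [reachA, actOf, reachB]

theorem reachB_snoc (t : ℕ) (mp : Pre M t) (b : M t) :
    reachB gA gB t (Fin.snoc mp b) = (reachA gA gB t mp, gA t (reachA gA gB t mp), b) := by
  simp [reachB]

theorem reachA_leftInverse (t : ℕ) :
    Function.LeftInverse (fun h : HistA X M U t => h.2.1) (reachA gA gB t) :=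
  reachA_snd gA gB t

theorem reachB_leftInverse (t : ℕ) :
    Function.LeftInverse (fun hb : HistB X M U t => (Fin.snoc hb.1.2.1 hb.2.2 : Pre M (t + 1)))
      (reachB gA gB t) := fun mp => by
  simp only [reachB, reachA_snd]
  exact Fin.snoc_init_self mp

end Reach

section Weights

variable {X M U : ℕ → Type} (phat : X 0 → ℝ) (P : ∀ t, X t → U t → X (t + 1) → ℝ)

/-- `μ^{*A}` without its normalizing denominators. On the history reached by a strategy profile
it is the joint probability of the states `x_{0:t}` and that history. -/
noncomputable def weightA : ∀ t : ℕ, HistA X M U t → Pre X (t + 1) → ℝ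
  | 0, _, xs => phat (xs 0)
  | t + 1, h, xs =>
    weightA t h.prevB.1 (Fin.init xs) *
        h.1 (Fin.last t) (xs (Fin.last t).castSucc) (h.2.1 (Fin.last t)) *
      P t (xs (Fin.last t).castSucc) (h.2.2 (Fin.last t)) (xs (Fin.last (t + 1)))

noncomputable def weightB (t : ℕ) (hb : HistB X M U t) (xs : Pre X (t + 1)) : ℝ :=
  weightA phat P t hb.1 xs * hb.2.1 (xs (Fin.last t)) hb.2.2

theorem weightA_succ (t : ℕ) (h : HistA X M U (t + 1)) (xs : Pre X (t + 2)) :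
    weightA phat P (t + 1) h xs =
      weightB phat P t h.prevB (Fin.init xs) *
        P t (Fin.init xs (Fin.last t)) (h.2.2 (Fin.last t)) (xs (Fin.last (t + 1))) :=
  rfl

theorem muA_succ [∀ t, Fintype (X t)] (t : ℕ) (h : HistA X M U (t + 1)) (xs : Pre X (t + 2)) :
    muA phat P (t + 1) h xs =
      muB phat P t h.prevB (Fin.init xs) *
        P t (Fin.init xs (Fin.last t)) (h.2.2 (Fin.last t)) (xs (Fin.last (t + 1))) :=
  rfl

theorem weightA_nonneg (hphat : ∀ x, 0 ≤ phat x) (hP : ∀ t x u y, 0 ≤ P t x u y) :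
    ∀ (t : ℕ) (h : HistA X M U t), (∀ s x m, 0 ≤ h.1 s x m) →
      ∀ xs, 0 ≤ weightA phat P t h xs
  | 0, _, _, xs => hphat (xs 0)
  | t + 1, _, hh, _ =>
    mul_nonneg (mul_nonneg (weightA_nonneg hphat hP t _ (fun s x m => hh s.castSucc x m) _)
      (hh _ _ _)) (hP _ _ _ _)

theorem sum_weightA_succ [∀ t, Fintype (X t)] (t : ℕ) (hP : ∀ x u, ∑ y, P t x u y = 1)
    (h : HistA X M U (t + 1)) :
    ∑ xs, weightA phat P (t + 1) h xs = ∑ ys, weightB phat P t h.prevB ys := by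
  rw [sum_pre_succ]
  refine Finset.sum_congr rfl fun ys _ => ?_
  simp only [weightA_succ, Fin.init_snoc, Fin.snoc_last]
  rw [← Finset.mul_sum, hP, mul_one]

end Weights

section Normalization

variable {X M U : ℕ → Type} [∀ t, Fintype (X t)] {phat : X 0 → ℝ}
  {P : ∀ t, X t → U t → X (t + 1) → ℝ}

theorem weightB_eq_muB_mul_sum {t : ℕ} {hb : HistB X M U t}
    (hA : ∀ xs,
      weightA phat P t hb.1 xs = muA phat P t hb.1 xs * ∑ ys, weightA phat P t hb.1 ys)
    (hB : ∀ xs, 0 ≤ weightB phat P t hb xs) (xs : Pre X (t + 1)) :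
    weightB phat P t hb xs = muB phat P t hb xs * ∑ ys, weightB phat P t hb ys :=
  mul_eq_bayes_mul_sum hA hB xs

theorem weightA_eq_muA_mul_sum (hphat : phat ∈ stdSimplex ℝ (X 0))
    (hP : ∀ t x u, P t x u ∈ stdSimplex ℝ (X (t + 1))) :
    ∀ (t : ℕ) (h : HistA X M U t), (∀ s x m, 0 ≤ h.1 s x m) →
      ∀ xs, weightA phat P t h xs = muA phat P t h xs * ∑ ys, weightA phat P t h ys
  | 0, _, _, xs => by
    have hsum : ∑ ys : Pre X 1, phat (ys 0) = 1 :=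
      ((Equiv.piUnique fun s : Fin 1 => X s).sum_comp phat).trans hphat.2
    simp only [weightA, muA, hsum, mul_one]
  | t + 1, h, hh, xs => by
    have hA := weightA_eq_muA_mul_sum hphat hP t h.prevB.1 fun s x m => hh s.castSucc x m
    have hB (ys : Pre X (t + 1)) : 0 ≤ weightB phat P t h.prevB ys :=
      mul_nonneg (weightA_nonneg phat P hphat.1 (fun t x u => (hP t x u).1) t _
        (fun s x m => hh s.castSucc x m) ys) (hh _ _ _)
    rw [weightA_succ, muA_succ, sum_weightA_succ phat P t (fun x u => (hP t x u).2),
      weightB_eq_muB_mul_sum hA hB]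
    ring

end Normalization

section Trajectories

variable {X M U : ℕ → Type} (phat : X 0 → ℝ) (P : ∀ t, X t → U t → X (t + 1) → ℝ)
  (gA : StratA X M U) (gB : StratB X M U)

/-- The probability under `Pr^g` of the prefix `(x_{0:t}, m_{0:t})`, in the closed form of
`trajProb`. -/
noncomputable def prefixProb (t : ℕ) (xb : Pre X (t + 1)) (mb : Pre M (t + 1)) : ℝ :=
  phat (xb ⟨0, t.succ_pos⟩) *
    (∏ s : Fin (t + 1), gA s (reachA gA gB s (trunc mb s (by omega))) (xb s) (mb s)) *
    ∏ s : Fin t,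
      P s (xb s.castSucc) (actOf gA gB s (trunc mb (s + 1) (by omega))) (xb s.succ)

theorem trajProb_eq_prefixProb (t : ℕ) (hT : 0 < t + 1) (x : Pre X (t + 1))
    (m : Pre M (t + 1)) : trajProb hT phat P gA gB x m = prefixProb phat P gA gB t x m := by
  rw [trajProb, prefixProb]
  congr 1
  rw [Fin.prod_univ_castSucc, dif_neg (by simp), mul_one]
  refine Finset.prod_congr rfl fun s _ => ?_
  rw [dif_pos (by simp)]
  rfl

theorem prefixProb_succ (t : ℕ) (xb : Pre X (t + 2)) (mb : Pre M (t + 2)) :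
    prefixProb phat P gA gB (t + 1) xb mb =
      prefixProb phat P gA gB t (Fin.init xb) (Fin.init mb) *
        P t (xb (Fin.last t).castSucc) (actOf gA gB t (Fin.init mb)) (xb (Fin.last (t + 1))) *
        gA (t + 1) (reachA gA gB (t + 1) (Fin.init mb)) (xb (Fin.last (t + 1)))
          (mb (Fin.last (t + 1))) := by
  rw [prefixProb, prefixProb, Fin.prod_univ_castSucc (n := t),
    Fin.prod_univ_castSucc (n := t + 1)]
  ring!

theorem weightA_reachA_succ (t : ℕ) (mp : Pre M (t + 1)) (xs : Pre X (t + 2)) :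
    weightA phat P (t + 1) (reachA gA gB (t + 1) mp) xs =
      weightB phat P t (reachB gA gB t mp) (Fin.init xs) *
        P t (Fin.init xs (Fin.last t)) (actOf gA gB t mp) (xs (Fin.last (t + 1))) := by
  rw [weightA_succ, prevB_reachA_succ, reachA_succ_action_last]

theorem prefixProb_eq_weightB :
    ∀ (t : ℕ) (xb : Pre X (t + 1)) (mb : Pre M (t + 1)),
      prefixProb phat P gA gB t xb mb = weightB phat P t (reachB gA gB t mb) xb
  | 0, xb, mb => by
    simp [prefixProb, weightB, weightA, reachB, reachA]
  | t + 1, xb, mb => by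
    rw [prefixProb_succ, prefixProb_eq_weightB t]
    exact (congrArg (· * _) (weightA_reachA_succ phat P gA gB t _ xb)).symm

theorem sum_ite_trunc_trajProb_eq_prefixProb [∀ t, Fintype (X t)] [∀ t, Fintype (M t)]
    {T : ℕ} (hT : 0 < T) (hP : ∀ t x u, P t x u ∈ stdSimplex ℝ (X (t + 1)))
    (hgA : ∀ t h x, gA t h x ∈ stdSimplex ℝ (M t))
    (t : ℕ) (ht : t + 1 ≤ T) (mb : Pre M (t + 1)) (xb : Pre X (t + 1)) :
    ∑ x, ∑ m, (if trunc m (t + 1) ht = mb ∧ trunc x (t + 1) ht = xb then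
        trajProb hT phat P gA gB x m else 0) = prefixProb phat P gA gB t xb mb := by
  obtain ⟨k, hk⟩ : ∃ k, T = t + 1 + k := ⟨T - (t + 1), by omega⟩
  induction k generalizing t with
  | zero =>
    obtain rfl : T = t + 1 := hk
    simp [trunc_self, ite_and, trajProb_eq_prefixProb]
  | succ k ih =>
    have comm₃ {γ : Type} [Fintype γ] (g : γ → M (t + 1) → X (t + 1) → ℝ) :
        ∑ y, ∑ b, ∑ a, g y b a = ∑ b, ∑ a, ∑ y, g y b a :=
      Finset.sum_comm.trans (Finset.sum_congr rfl fun _ _ => Finset.sum_comm)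
    calc _ = ∑ b, ∑ a, ∑ x, ∑ m,
          if trunc m (t + 2) (by omega) = Fin.snoc mb b ∧
              trunc x (t + 2) (by omega) = Fin.snoc xb a then
            trajProb hT phat P gA gB x m else 0 := by
          simp_rw [ite_trunc_and_trunc_eq_sum _ _ (show t + 2 ≤ T by omega)]
          exact (Finset.sum_congr rfl fun x _ => comm₃ _).trans (comm₃ _)
      _ = ∑ b, ∑ a, prefixProb phat P gA gB t xb mb *
            P t (xb (Fin.last t)) (actOf gA gB t mb) a *
            gA (t + 1) (reachA gA gB (t + 1) mb) a b := by
          simp_rw [fun mb xb => ih (t + 1) (by omega) mb xb (by omega), prefixProb_succ,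
            Fin.init_snoc, Fin.snoc_last, Fin.snoc_castSucc]
          rfl
      _ = prefixProb phat P gA gB t xb mb := by
          rw [Finset.sum_comm]
          simp_rw [← Finset.mul_sum, (hgA _ _ _).2, mul_one]
          rw [← Finset.mul_sum, (hP _ _ _).2, mul_one]

theorem sum_ite_trunc_trajProb_eq_weightA [∀ t, Fintype (X t)] [∀ t, Fintype (M t)] {T : ℕ}
    (hT : 0 < T) (hP : ∀ t x u, P t x u ∈ stdSimplex ℝ (X (t + 1)))
    (hgA : ∀ t h x, gA t h x ∈ stdSimplex ℝ (M t))
    (t : ℕ) (ht : t < T) (mp : Pre M t) (xb : Pre X (t + 1)) :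
    ∑ x, ∑ m, (if trunc m t ht.le = mp ∧ trunc x (t + 1) ht = xb then
        trajProb hT phat P gA gB x m else 0) = weightA phat P t (reachA gA gB t mp) xb := by
  simp_rw [ite_trunc_and_eq_sum _ ht]
  rw [Finset.sum_congr rfl fun x _ => Finset.sum_comm, Finset.sum_comm]
  simp_rw [sum_ite_trunc_trajProb_eq_prefixProb phat P gA gB hT hP hgA t ht,
    prefixProb_eq_weightB, weightB, reachB_snoc, ← Finset.mul_sum]
  rw [(hgA _ _ _).2, mul_one]

theorem weightA_reachA_eq_muA_mul_sum [∀ t, Fintype (X t)] [∀ t, Fintype (M t)]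
    (hphat : phat ∈ stdSimplex ℝ (X 0))
    (hP : ∀ t x u, P t x u ∈ stdSimplex ℝ (X (t + 1)))
    (hgA : ∀ t h x, gA t h x ∈ stdSimplex ℝ (M t)) (t : ℕ) (mp : Pre M t)
    (xs : Pre X (t + 1)) :
    weightA phat P t (reachA gA gB t mp) xs =
      muA phat P t (reachA gA gB t mp) xs * ∑ ys, weightA phat P t (reachA gA gB t mp) ys :=
  weightA_eq_muA_mul_sum hphat hP t _
    (reachA_experiment_nonneg gA gB (fun t h x => (hgA t h x).1) t mp) xs

theorem weightB_reachB_eq_muB_mul_sum [∀ t, Fintype (X t)] [∀ t, Fintype (M t)]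
    (hphat : phat ∈ stdSimplex ℝ (X 0))
    (hP : ∀ t x u, P t x u ∈ stdSimplex ℝ (X (t + 1)))
    (hgA : ∀ t h x, gA t h x ∈ stdSimplex ℝ (M t)) (t : ℕ) (mb : Pre M (t + 1))
    (xs : Pre X (t + 1)) :
    weightB phat P t (reachB gA gB t mb) xs =
      muB phat P t (reachB gA gB t mb) xs * ∑ ys, weightB phat P t (reachB gA gB t mb) ys :=
  weightB_eq_muB_mul_sum (weightA_reachA_eq_muA_mul_sum phat P gA gB hphat hP hgA t _)
    (fun ys => mul_nonneg (weightA_nonneg phat P hphat.1 (fun t x u => (hP t x u).1) t _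
      (reachA_experiment_nonneg gA gB (fun t h x => (hgA t h x).1) t _) ys) ((hgA _ _ _).1 _)) xs

end Trajectories

theorem strategyIndependent_beliefs_consistent_general
    {X M U : ℕ → Type} [∀ t, Fintype (X t)] [∀ t, Fintype (M t)]
    (T : ℕ) (hT : 0 < T)
    (phat : X 0 → ℝ) (hphat : phat ∈ stdSimplex ℝ (X 0))
    (P : ∀ t, X t → U t → X (t + 1) → ℝ)
    (hP : ∀ t x u, P t x u ∈ stdSimplex ℝ (X (t + 1)))
    (gA : StratA X M U) (gB : StratB X M U)
    (hgA : ∀ t h x, gA t h x ∈ stdSimplex ℝ (M t)) :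
    -- part 1: consistency of the principal's belief `μ_t^{*A}` (stages `t < T`)
    (∀ (t : ℕ) (ht : t < T) (h : HistA X M U t),
      (0 < ∑ x : Pre X T, ∑ m : Pre M T,
          if reachA gA gB t (trunc m t ht.le) = h then trajProb hT phat P gA gB x m
          else 0) →
      ∀ xbar : Pre X (t + 1),
        (∑ x : Pre X T, ∑ m : Pre M T,
            if reachA gA gB t (trunc m t ht.le) = h ∧ trunc x (t + 1) ht = xbar then
              trajProb hT phat P gA gB x m
            else 0) =
          muA phat P t h xbar *
            (∑ x : Pre X T, ∑ m : Pre M T,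
              if reachA gA gB t (trunc m t ht.le) = h then trajProb hT phat P gA gB x m
              else 0)) ∧
    -- part 2: consistency of the receiver's belief `μ_t^{*B}` (stages `t < T`)
    (∀ (t : ℕ) (ht : t < T) (hb : HistB X M U t),
      (0 < ∑ x : Pre X T, ∑ m : Pre M T,
          if reachB gA gB t (trunc m (t + 1) ht) = hb then trajProb hT phat P gA gB x m
          else 0) →
      ∀ xbar : Pre X (t + 1),
        (∑ x : Pre X T, ∑ m : Pre M T,
            if reachB gA gB t (trunc m (t + 1) ht) = hb ∧ trunc x (t + 1) ht = xbar then
              trajProb hT phat P gA gB x m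
            else 0) =
          muB phat P t hb xbar *
            (∑ x : Pre X T, ∑ m : Pre M T,
              if reachB gA gB t (trunc m (t + 1) ht) = hb then trajProb hT phat P gA gB x m
              else 0)) := by
  refine ⟨fun t ht h _ xbar => ?_, fun t ht hb _ xbar => ?_⟩
  · by_cases hr : reachA gA gB t h.2.1 = h
    · simp_rw [(reachA_leftInverse gA gB t).apply_eq_iff_of_apply_eq hr]
      refine sum_ite_and_trunc_eq_mul_sum_ite _ _ ht
        (sum_ite_trunc_trajProb_eq_weightA phat P gA gB hT hP hgA t ht h.2.1) (fun xb => ?_) xbar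
      simpa only [hr] using weightA_reachA_eq_muA_mul_sum phat P gA gB hphat hP hgA t h.2.1 xb
    · simp only [(reachA_leftInverse gA gB t).apply_ne_of_apply_ne hr, false_and, if_false,
        Finset.sum_const_zero, mul_zero]
  · set mb : Pre M (t + 1) := Fin.snoc hb.1.2.1 hb.2.2
    by_cases hr : reachB gA gB t mb = hb
    · simp_rw [(reachB_leftInverse gA gB t).apply_eq_iff_of_apply_eq hr]
      refine sum_ite_and_trunc_eq_mul_sum_ite _ _ ht
        (fun xb => (sum_ite_trunc_trajProb_eq_prefixProb phat P gA gB hT hP hgA t ht mb xb).trans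
          (prefixProb_eq_weightB phat P gA gB t xb mb)) (fun xb => ?_) xbar
      simpa only [hr] using weightB_reachB_eq_muB_mul_sum phat P gA gB hphat hP hgA t mb xb
    · simp only [(reachB_leftInverse gA gB t).apply_ne_of_apply_ne hr, false_and, if_false,
        Finset.sum_const_zero, mul_zero]

/-- Lemma 5: the beliefs `μ^{*A}, μ^{*B}` are consistent with every pure strategy profile
`g = (gA, gB)`: for every stage `t` and every history of positive probability under
`Pr^g`, the conditional distribution of the state trajectory `X_{0:t}` given that history
equals the strategy-independent belief at that history (stated multiplicatively:
joint probability = belief × probability of the history). -/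
theorem strategyIndependent_beliefs_consistent
    {X M U : ℕ → Type} [∀ t, Fintype (X t)] [∀ t, Fintype (M t)]
    [∀ t, Nonempty (X t)] [∀ t, Nonempty (M t)] [∀ t, Nonempty (U t)]
    (T : ℕ) (hT : 0 < T)
    (phat : X 0 → ℝ) (hphat : phat ∈ stdSimplex ℝ (X 0))
    (P : ∀ t, X t → U t → X (t + 1) → ℝ)
    (hP : ∀ t x u, P t x u ∈ stdSimplex ℝ (X (t + 1)))
    (gA : StratA X M U) (gB : StratB X M U)
    (hgA : ∀ t h x, gA t h x ∈ stdSimplex ℝ (M t)) :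
    -- part 1: consistency of the principal's belief `μ_t^{*A}` (stages `t < T`)
    (∀ (t : ℕ) (ht : t < T) (h : HistA X M U t),
      (0 < ∑ x : Pre X T, ∑ m : Pre M T,
          if reachA gA gB t (trunc m t ht.le) = h then trajProb hT phat P gA gB x m
          else 0) →
      ∀ xbar : Pre X (t + 1),
        (∑ x : Pre X T, ∑ m : Pre M T,
            if reachA gA gB t (trunc m t ht.le) = h ∧ trunc x (t + 1) ht = xbar then
              trajProb hT phat P gA gB x m
            else 0) =
          muA phat P t h xbar *
            (∑ x : Pre X T, ∑ m : Pre M T,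
              if reachA gA gB t (trunc m t ht.le) = h then trajProb hT phat P gA gB x m
              else 0)) ∧
    -- part 2: consistency of the receiver's belief `μ_t^{*B}` (stages `t < T`)
    (∀ (t : ℕ) (ht : t < T) (hb : HistB X M U t),
      (0 < ∑ x : Pre X T, ∑ m : Pre M T,
          if reachB gA gB t (trunc m (t + 1) ht) = hb then trajProb hT phat P gA gB x m
          else 0) →
      ∀ xbar : Pre X (t + 1),
        (∑ x : Pre X T, ∑ m : Pre M T,
            if reachB gA gB t (trunc m (t + 1) ht) = hb ∧ trunc x (t + 1) ht = xbar then
              trajProb hT phat P gA gB x m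
            else 0) =
          muB phat P t hb xbar *
            (∑ x : Pre X T, ∑ m : Pre M T,
              if reachB gA gB t (trunc m (t + 1) ht) = hb then trajProb hT phat P gA gB x m
              else 0)) :=
  strategyIndependent_beliefs_consistent_general T hT phat hphat P hP gA gB hgA
end
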